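/- Let n ≥ 2 and h ≥ 0 be integers with w = 2h + 1 ≤ n, let R ⊆ Fin n have cardinality r, and for a permutation σ of Fin n define R'_σ = R ∪ {k ∈ Fin n : ∃ j ∈ R, |σ(j) − σ(k)|_n ≤ h}. Then for σ drawn uniformly at random from the permutations of Fin n, the expected cardinality satisfies E_σ[|R'_σ|] ≥ r + (n − r)·(1 − (1 − (w − 1)/(n − 1))^r). -/

import Mathlib

open scoped Classical

/-- Circular distance on `Fin n`: `|i − j|_n = min(|i − j|, n − |i − j|)`. -/
def circDist (n : ℕ) (i j : Fin n) : ℕ :=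
  min (max i.val j.val - min i.val j.val) (n - (max i.val j.val - min i.val j.val))

/-- One layer of stochastic-attention receptive-field expansion:
`R'_σ = R ∪ {k : ∃ j ∈ R, |σ j − σ k|_n ≤ h}`. -/
noncomputable def expandOnce (n h : ℕ) (R : Finset (Fin n)) (σ : Equiv.Perm (Fin n)) :
    Finset (Fin n) :=
  R ∪ Finset.univ.filter (fun k => ∃ j ∈ R, circDist n (σ j) (σ k) ≤ h)

lemma circDist_comm (n : ℕ) (i j : Fin n) : circDist n i j = circDist n j i := by
  simp only [circDist]; omega

lemma circDist_add_mod (n : ℕ) (hn : 0 < n) (p : Fin n) (e : ℕ) (he : e < n) :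
    circDist n p ⟨(p.val + e) % n, Nat.mod_lt _ hn⟩ = min e (n - e) := by
  have hp := p.isLt
  rcases lt_or_ge (p.val + e) n with hlt | hge
  · have hq : (p.val + e) % n = p.val + e := Nat.mod_eq_of_lt hlt
    simp only [circDist, hq]; omega
  · have hq : (p.val + e) % n = p.val + e - n := by
      rw [Nat.mod_eq_sub_mod hge, Nat.mod_eq_of_lt (by omega)]
    simp only [circDist, hq]; omega

lemma window_card_ge (n h : ℕ) (hn : 0 < n) (hwn : 2*h+1 ≤ n) (p : Fin n) :
    2*h+1 ≤ (Finset.univ.filter (fun q => circDist n p q ≤ h)).card := by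
  classical
  have hcard := Finset.card_le_card_of_injOn
    (f := fun d : ℕ => (⟨(p.val + ((n - h) + d)) % n, Nat.mod_lt _ hn⟩ : Fin n))
    (s := Finset.range (2*h+1))
    (t := Finset.univ.filter (fun q => circDist n p q ≤ h))
    ?maps ?inj
  · simpa using hcard
  case maps =>
    intro d hd
    rw [Finset.mem_coe, Finset.mem_range] at hd
    rw [Finset.mem_coe, Finset.mem_filter]
    refine ⟨Finset.mem_univ _, ?_⟩
    show circDist n p ⟨(p.val + ((n - h) + d)) % n, Nat.mod_lt _ hn⟩ ≤ h
    rcases lt_or_ge d h with hdh | hdh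
    · have he : (n - h) + d < n := by omega
      rw [circDist_add_mod n hn p ((n-h)+d) he]
      omega
    · have he : d - h < n := by omega
      have hval : (p.val + ((n - h) + d)) % n = (p.val + (d - h)) % n := by
        have hx : p.val + ((n - h) + d) = (p.val + (d - h)) + n := by omega
        rw [hx, Nat.add_mod_right]
      have heq : (⟨(p.val + ((n - h) + d)) % n, Nat.mod_lt _ hn⟩ : Fin n)
          = ⟨(p.val + (d - h)) % n, Nat.mod_lt _ hn⟩ := Fin.ext hval
      rw [heq, circDist_add_mod n hn p (d-h) he]
      omega
  case inj =>
    intro d1 h1 d2 h2 hf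
    rw [Finset.mem_coe, Finset.mem_range] at h1 h2
    have hval : (p.val + ((n-h) + d1)) % n = (p.val + ((n-h) + d2)) % n :=
      congrArg Fin.val hf
    have hm : ((p.val + (n-h)) + d1) % n = ((p.val + (n-h)) + d2) % n := by
      rw [Nat.add_assoc, Nat.add_assoc]; exact hval
    have hme : d1 ≡ d2 [MOD n] := Nat.ModEq.add_left_cancel' (p.val + (n-h)) hm
    have : d1 % n = d2 % n := hme
    rw [Nat.mod_eq_of_lt (by omega), Nat.mod_eq_of_lt (by omega)] at this
    exact this

lemma miss_count_bound (n h : ℕ) (hn : 2 ≤ n) (hwn : 2*h+1 ≤ n) (k : Fin n)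
    (A : Finset (Fin n)) (hk : k ∉ A) :
    (Finset.univ.filter (fun σ : Equiv.Perm (Fin n) =>
        ∀ j ∈ A, ¬ circDist n (σ j) (σ k) ≤ h)).card * (n-1)^A.card
      ≤ Fintype.card (Equiv.Perm (Fin n)) * (n - (2*h+1))^A.card := by
  classical
  revert hk
  induction A using Finset.induction_on with
  | empty =>
    intro _
    simp
  | @insert j0 A hj0 ih =>
    intro hk
    rw [Finset.mem_insert] at hk
    push_neg at hk
    obtain ⟨hkj0, hkA⟩ := hk
    have ih' := ih hkA
    set M1 := Finset.univ.filter (fun σ : Equiv.Perm (Fin n) =>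
        ∀ j ∈ insert j0 A, ¬ circDist n (σ j) (σ k) ≤ h) with hM1
    set M0 := Finset.univ.filter (fun σ : Equiv.Perm (Fin n) =>
        ∀ j ∈ A, ¬ circDist n (σ j) (σ k) ≤ h) with hM0
    have key : M1.card * (n-1) ≤ M0.card * (n - (2*h+1)) := by
      have hfib : ∀ σ : Equiv.Perm (Fin n),
          (Finset.univ \ ({σ k} : Finset (Fin n))).card = n - 1 := by
        intro σ
        rw [Finset.card_sdiff_of_subset (Finset.subset_univ _), Finset.card_univ,
          Finset.card_singleton, Fintype.card_fin]
      have hD : (M1.sigma (fun σ => Finset.univ \ ({σ k} : Finset (Fin n)))).card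
          = M1.card * (n-1) := by
        rw [Finset.card_sigma]
        rw [Finset.sum_congr rfl (fun σ _ => hfib σ), Finset.sum_const, smul_eq_mul]
      have hT : (M0.sigma (fun σ => Finset.univ \
            (Finset.univ.filter (fun q => circDist n (σ k) q ≤ h)))).card
          ≤ M0.card * (n - (2*h+1)) := by
        rw [Finset.card_sigma]
        calc ∑ σ ∈ M0, (Finset.univ \
              (Finset.univ.filter (fun q => circDist n (σ k) q ≤ h))).card
            ≤ ∑ _σ ∈ M0, (n - (2*h+1)) := by
              apply Finset.sum_le_sum
              intro σ _
              have hwge := window_card_ge n h (by omega) hwn (σ k)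
              have hcs : (Finset.univ \
                  (Finset.univ.filter (fun q => circDist n (σ k) q ≤ h))).card
                  = n - (Finset.univ.filter (fun q => circDist n (σ k) q ≤ h)).card := by
                rw [Finset.card_sdiff_of_subset (Finset.filter_subset _ _), Finset.card_univ,
                  Fintype.card_fin]
              omega
          _ = M0.card * (n - (2*h+1)) := by rw [Finset.sum_const, smul_eq_mul]
      have hmap : ∀ x ∈ M1.sigma (fun σ => Finset.univ \ ({σ k} : Finset (Fin n))),
          (⟨Equiv.swap (x.1 j0) x.2 * x.1, x.1 j0⟩ : Σ _ : Equiv.Perm (Fin n), Fin n)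
            ∈ M0.sigma (fun σ => Finset.univ \
                (Finset.univ.filter (fun q => circDist n (σ k) q ≤ h))) := by
        rintro ⟨σ, v⟩ hx
        dsimp only
        rw [Finset.mem_sigma] at hx
        dsimp only at hx
        obtain ⟨hσ, hv⟩ := hx
        rw [hM1, Finset.mem_filter] at hσ
        have hP := hσ.2
        rw [Finset.mem_sdiff, Finset.mem_singleton] at hv
        have hvk : v ≠ σ k := hv.2
        have hkj0' : σ k ≠ σ j0 := fun hh => hkj0 (σ.injective hh)
        have hσ'k : (Equiv.swap (σ j0) v * σ) k = σ k := by
          rw [Equiv.Perm.mul_apply,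
            Equiv.swap_apply_of_ne_of_ne hkj0' (Ne.symm hvk)]
        rw [Finset.mem_sigma]
        constructor
        · rw [hM0, Finset.mem_filter]
          refine ⟨Finset.mem_univ _, ?_⟩
          intro j hj
          rw [hσ'k, Equiv.Perm.mul_apply]
          by_cases hjv : σ j = v
          · rw [hjv, Equiv.swap_apply_right]
            exact hP j0 (Finset.mem_insert_self _ _)
          · have hjj0 : σ j ≠ σ j0 := fun hh => hj0 (by
              have : j = j0 := σ.injective hh
              rwa [← this])
            rw [Equiv.swap_apply_of_ne_of_ne hjj0 hjv]
            exact hP j (Finset.mem_insert_of_mem hj)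
        · rw [Finset.mem_sdiff]
          refine ⟨Finset.mem_univ _, ?_⟩
          intro hmem
          rw [Finset.mem_filter] at hmem
          have hd := hmem.2
          rw [hσ'k, circDist_comm] at hd
          exact hP j0 (Finset.mem_insert_self _ _) hd
      have hinj : Set.InjOn (fun x : Σ _ : Equiv.Perm (Fin n), Fin n =>
          (⟨Equiv.swap (x.1 j0) x.2 * x.1, x.1 j0⟩ : Σ _ : Equiv.Perm (Fin n), Fin n))
          (M1.sigma (fun σ => Finset.univ \ ({σ k} : Finset (Fin n)))) := by
        rintro ⟨σ1, v1⟩ - ⟨σ2, v2⟩ - hEq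
        dsimp only at hEq
        have hτ : Equiv.swap (σ1 j0) v1 * σ1 = Equiv.swap (σ2 j0) v2 * σ2 :=
          congrArg Sigma.fst hEq
        have hu : σ1 j0 = σ2 j0 :=
          congrArg (fun x : Σ _ : Equiv.Perm (Fin n), Fin n => x.snd) hEq
        have hv1 : (Equiv.swap (σ1 j0) v1 * σ1) j0 = v1 := by
          rw [Equiv.Perm.mul_apply, Equiv.swap_apply_left]
        have hv2 : (Equiv.swap (σ2 j0) v2 * σ2) j0 = v2 := by
          rw [Equiv.Perm.mul_apply, Equiv.swap_apply_left]
        have hv : v1 = v2 := by rw [← hv1, hτ, hv2]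
        have hs1 : σ1 = Equiv.swap (σ1 j0) v1 * (Equiv.swap (σ1 j0) v1 * σ1) := by
          rw [← mul_assoc, Equiv.swap_mul_self, one_mul]
        have hs2 : σ2 = Equiv.swap (σ2 j0) v2 * (Equiv.swap (σ2 j0) v2 * σ2) := by
          rw [← mul_assoc, Equiv.swap_mul_self, one_mul]
        have hσ : σ1 = σ2 := by rw [hs1, hs2, hτ, hu, hv]
        subst hσ; subst hv; rfl

      have hle := Finset.card_le_card_of_injOn _ hmap hinj
      omega
    rw [Finset.card_insert_of_notMem hj0]
    calc M1.card * (n-1)^(A.card+1)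
        = (M1.card * (n-1)) * (n-1)^A.card := by ring
      _ ≤ (M0.card * (n - (2*h+1))) * (n-1)^A.card := Nat.mul_le_mul key (le_refl _)
      _ = (M0.card * (n-1)^A.card) * (n - (2*h+1)) := by ring
      _ ≤ (Fintype.card (Equiv.Perm (Fin n)) * (n - (2*h+1))^A.card) * (n - (2*h+1)) :=
          Nat.mul_le_mul ih' (le_refl _)
      _ = Fintype.card (Equiv.Perm (Fin n)) * (n - (2*h+1))^(A.card+1) := by ring

/-- For `n ≥ 2`, `w = 2h + 1 ≤ n` and `R ⊆ Fin n` with `|R| = r`, the expected size of the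
one-layer expansion under a uniform random permutation satisfies
`E_σ[|R'_σ|] ≥ r + (n − r)(1 − (1 − (w − 1)/(n − 1))^r)`. -/
theorem expected_expansion (n h : ℕ) (hn : 2 ≤ n) (w : ℕ) (hw : w = 2 * h + 1)
    (hwn : w ≤ n) (r : ℕ) (R : Finset (Fin n)) (hR : R.card = r) :
    (∑ σ : Equiv.Perm (Fin n), ((expandOnce n h R σ).card : ℝ))
      / (Fintype.card (Equiv.Perm (Fin n)) : ℝ)
    ≥ (r : ℝ) + ((n : ℝ) - (r : ℝ)) *
        (1 - (1 - ((w : ℝ) - 1) / ((n : ℝ) - 1)) ^ r) := by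
  classical
  have hn1' : (0:ℝ) < (n:ℝ) - 1 := by
    have : (2:ℝ) ≤ (n:ℝ) := by exact_mod_cast hn
    linarith
  set N := Fintype.card (Equiv.Perm (Fin n)) with hNdef
  have hNpos : 0 < N := Fintype.card_pos
  have hNR : (0:ℝ) < (N:ℝ) := by exact_mod_cast hNpos
  have hrn : r ≤ n := by
    rw [← hR]
    have := Finset.card_le_card (Finset.subset_univ R)
    simpa using this
  set ρ : ℝ := 1 - ((w:ℝ)-1)/((n:ℝ)-1) with hρ
  have hρ_eq : ρ = ((n - (2*h+1) : ℕ) : ℝ) / (((n-1 : ℕ)) : ℝ) := by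
    rw [hρ, hw]
    rw [Nat.cast_sub (by omega), Nat.cast_sub (by omega)]
    push_cast
    field_simp
    ring
  have hb_pos : (0:ℝ) < (((n-1:ℕ)) : ℝ) := by
    have : (1:ℕ) ≤ n - 1 := by omega
    exact_mod_cast Nat.lt_of_lt_of_le Nat.zero_lt_one this
  -- per-k bound on the covering count
  have hkey : ∀ kk : Fin n, kk ∉ R →
      (N:ℝ) * (1 - ρ^r) ≤ ((Finset.univ.filter (fun σ : Equiv.Perm (Fin n) =>
          ∃ j ∈ R, circDist n (σ j) (σ kk) ≤ h)).card : ℝ) := by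
    intro kk hkk
    have hmiss := miss_count_bound n h hn (by omega) kk R hkk
    rw [hR] at hmiss
    have hsplit := Finset.card_filter_add_card_filter_not
      (s := (Finset.univ : Finset (Equiv.Perm (Fin n))))
      (p := fun σ : Equiv.Perm (Fin n) => ∃ j ∈ R, circDist n (σ j) (σ kk) ≤ h)
    have hfe : Finset.univ.filter (fun σ : Equiv.Perm (Fin n) =>
          ¬ ∃ j ∈ R, circDist n (σ j) (σ kk) ≤ h)
        = Finset.univ.filter (fun σ : Equiv.Perm (Fin n) =>
            ∀ j ∈ R, ¬ circDist n (σ j) (σ kk) ≤ h) := by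
      apply Finset.filter_congr
      intro σ _
      simp only [not_exists, not_and]
    rw [hfe, Finset.card_univ, ← hNdef] at hsplit
    set m := (Finset.univ.filter (fun σ : Equiv.Perm (Fin n) =>
        ∀ j ∈ R, ¬ circDist n (σ j) (σ kk) ≤ h)).card with hm
    set c := (Finset.univ.filter (fun σ : Equiv.Perm (Fin n) =>
        ∃ j ∈ R, circDist n (σ j) (σ kk) ≤ h)).card with hc
    have hmρ : (m:ℝ) ≤ (N:ℝ) * ρ^r := by
      rw [hρ_eq, div_pow, ← mul_div_assoc, le_div_iff₀ (by positivity)]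
      have : (m:ℝ) * (((n-1:ℕ)):ℝ)^r ≤ (N:ℝ) * (((n-(2*h+1):ℕ)):ℝ)^r := by
        exact_mod_cast hmiss
      linarith
    have hcm : (c:ℝ) + (m:ℝ) = (N:ℝ) := by exact_mod_cast hsplit
    nlinarith [pow_nonneg (by positivity : (0:ℝ) ≤ ((n - (2*h+1) : ℕ) : ℝ) / (((n-1 : ℕ)) : ℝ)) r]
  -- rewrite the summand
  have hcard : ∀ σ : Equiv.Perm (Fin n), ((expandOnce n h R σ).card : ℝ)
      = (r:ℝ) + ∑ kk ∈ Finset.univ \ R,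
          (if ∃ j ∈ R, circDist n (σ j) (σ kk) ≤ h then (1:ℝ) else 0) := by
    intro σ
    have hU : expandOnce n h R σ
        = R ∪ (Finset.univ \ R).filter (fun kk => ∃ j ∈ R, circDist n (σ j) (σ kk) ≤ h) := by
      rw [expandOnce]
      ext x
      simp only [Finset.mem_union, Finset.mem_filter, Finset.mem_sdiff, Finset.mem_univ,
        true_and]
      tauto
    have hdisj : Disjoint R ((Finset.univ \ R).filter
        (fun kk => ∃ j ∈ R, circDist n (σ j) (σ kk) ≤ h)) := by
      apply Finset.disjoint_left.mpr
      intro x hx hx'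
      rw [Finset.mem_filter, Finset.mem_sdiff] at hx'
      exact hx'.1.2 hx
    rw [hU, Finset.card_union_of_disjoint hdisj, hR, Finset.card_filter]
    push_cast
    rfl
  -- main inequality
  rw [ge_iff_le, le_div_iff₀ hNR]
  rw [Finset.sum_congr rfl (fun σ _ => hcard σ)]
  rw [Finset.sum_add_distrib, Finset.sum_const, Finset.card_univ, ← hNdef, nsmul_eq_mul]
  rw [Finset.sum_comm]
  have hterm : ∀ kk ∈ Finset.univ \ R,
      (N:ℝ) * (1 - ρ^r) ≤ ∑ σ : Equiv.Perm (Fin n),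
        (if ∃ j ∈ R, circDist n (σ j) (σ kk) ≤ h then (1:ℝ) else 0) := by
    intro kk hkk
    rw [Finset.mem_sdiff] at hkk
    have := hkey kk hkk.2
    rw [Finset.sum_boole]
    simpa using this
  have hsum_ge : ((n - r : ℕ) : ℝ) * ((N:ℝ) * (1 - ρ^r))
      ≤ ∑ kk ∈ Finset.univ \ R, ∑ σ : Equiv.Perm (Fin n),
          (if ∃ j ∈ R, circDist n (σ j) (σ kk) ≤ h then (1:ℝ) else 0) := by
    have hcompl : (Finset.univ \ R).card = n - r := by
      rw [Finset.card_sdiff_of_subset (Finset.subset_univ R), Finset.card_univ, Fintype.card_fin, hR]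
    calc ((n - r : ℕ) : ℝ) * ((N:ℝ) * (1 - ρ^r))
        = ∑ _kk ∈ Finset.univ \ R, (N:ℝ) * (1 - ρ^r) := by
          rw [Finset.sum_const, hcompl, nsmul_eq_mul]
      _ ≤ _ := Finset.sum_le_sum hterm
  have hcast : ((n - r : ℕ) : ℝ) = (n:ℝ) - (r:ℝ) := by
    rw [Nat.cast_sub hrn]
  rw [hcast] at hsum_ge
  have hexpand : ((r:ℝ) + ((n:ℝ) - (r:ℝ)) * (1 - ρ^r)) * (N:ℝ)
      = (N:ℝ) * (r:ℝ) + ((n:ℝ) - (r:ℝ)) * ((N:ℝ) * (1 - ρ^r)) := by ring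
  rw [hexpand]
  linarith
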